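/- arXiv:1805.09773 — 2 statements merged into one kernel-verified Lean document; each statement's English description precedes it below -/
import Mathlib

section
/- Let n ≥ 2 be an integer, K ∈ ℝ with K ≠ 0, α > 0 with 2 + αK > 0, and T > 0. Suppose σ : [0,T) → ℝ is differentiable and satisfies σ(t) > 0 and 2σ(t) + αK > 0 for every t ∈ [0,T), and suppose σ satisfies the implicit (Lambert W–type) equation σ(t) = −2K(n−1)t + 1 + (αK/2)·log((2σ(t) + αK)/(2 + αK)) for all t ∈ [0,T). Then σ(0) = 1 and σ satisfies the ordinary differential equation σ'(t) = −2K(n−1) − αK²(n−1)/σ(t) for all t ∈ [0,T). -/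
/-!
Put `a = αK` and `F(x) = x - (a/2) log((2x + a)/(2 + a))`, so that the implicit equation reads
`F(σ t) = -2K(n-1)t + 1`. Since `F'(x) = 2x/(2x + a) > 0` where `x > 0` and `2x + a > 0`, `F` is
injective there, and `F(1) = 1` forces `σ 0 = 1`. Differentiating `F ∘ σ` gives
`σ' · 2σ/(2σ + a) = -2K(n-1)`, which is the ODE.
-/

open Set

noncomputable def rg2Potential (a x : ℝ) : ℝ :=
  x - a / 2 * Real.log ((2 * x + a) / (2 + a))

lemma rg2Potential_one (a : ℝ) : rg2Potential a 1 = 1 := by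
  simp [rg2Potential]

lemma hasDerivAt_rg2Potential {a x : ℝ} (ha : 2 + a ≠ 0) (hx : 2 * x + a ≠ 0) :
    HasDerivAt (rg2Potential a) (2 * x / (2 * x + a)) x := by
  have hlin : HasDerivAt (fun x => (2 * x + a) / (2 + a)) (2 / (2 + a)) x := by
    simpa using (((hasDerivAt_id x).const_mul 2).add_const a).div_const (2 + a)
  refine ((hasDerivAt_id' x).sub ((hlin.log (div_ne_zero hx ha)).const_mul (a / 2))).congr_deriv ?_
  field_simp
  ring

lemma rg2Potential_strictMonoOn {a : ℝ} (ha : 2 + a ≠ 0) :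
    StrictMonoOn (rg2Potential a) {x | 0 < x ∧ 0 < 2 * x + a} := by
  have hD : {x : ℝ | 0 < x ∧ 0 < 2 * x + a} = Ioi 0 ∩ Ioi (-a / 2) := by
    ext x
    simp only [mem_ofPred_eq, mem_inter_iff, mem_Ioi]
    constructor <;> rintro ⟨h₁, h₂⟩ <;> exact ⟨h₁, by linarith⟩
  have hderiv : ∀ x ∈ Ioi (0 : ℝ) ∩ Ioi (-a / 2),
      HasDerivAt (rg2Potential a) (2 * x / (2 * x + a)) x := fun x hx =>
    hasDerivAt_rg2Potential ha (by linarith [hx.2.out])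
  rw [hD]
  refine strictMonoOn_of_deriv_pos ((convex_Ioi 0).inter (convex_Ioi _))
    (fun x hx => (hderiv x hx).continuousAt.continuousWithinAt) fun x hx => ?_
  rw [(isOpen_Ioi.inter isOpen_Ioi).interior_eq] at hx
  rw [(hderiv x hx).deriv]
  exact div_pos (by linarith [hx.1.out]) (by linarith [hx.2.out])

lemma deriv_eq_of_rg2Potential_comp_eqOn {a c b t : ℝ} {σ : ℝ → ℝ} {s : Set ℝ}
    (ha : 2 + a ≠ 0) (hs : UniqueDiffWithinAt ℝ s t) (ht : t ∈ s)
    (hσ : DifferentiableAt ℝ σ t) (hσt : σ t ≠ 0) (hσt' : 2 * σ t + a ≠ 0)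
    (hcomp : EqOn (rg2Potential a ∘ σ) (fun x => c * x + b) s) :
    deriv σ t = c + c * a / (2 * σ t) := by
  have hF : HasDerivAt (rg2Potential a ∘ σ) (2 * σ t / (2 * σ t + a) * deriv σ t) t :=
    (hasDerivAt_rg2Potential ha hσt').comp t hσ.hasDerivAt
  have hL : HasDerivAt (fun x => c * x + b) c t := by
    simpa using ((hasDerivAt_id t).const_mul c).add_const b
  have hchain : 2 * σ t / (2 * σ t + a) * deriv σ t = c :=
    hs.eq_deriv _ hF.hasDerivWithinAt (hL.hasDerivWithinAt.congr hcomp (hcomp ht))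
  field_simp at hchain ⊢
  linarith

theorem stmt_0_general (n : ℕ) (K α T : ℝ)
    (hαK : 0 < 2 + α * K) (hT : 0 < T) (σ : ℝ → ℝ)
    (hdiff : ∀ t ∈ Set.Ico (0:ℝ) T, DifferentiableAt ℝ σ t)
    (hpos : ∀ t ∈ Set.Ico (0:ℝ) T, 0 < σ t)
    (hpos2 : ∀ t ∈ Set.Ico (0:ℝ) T, 0 < 2 * σ t + α * K)
    (himp : ∀ t ∈ Set.Ico (0:ℝ) T,
      σ t = -2 * K * ((n:ℝ) - 1) * t + 1
        + (α * K / 2) * Real.log ((2 * σ t + α * K) / (2 + α * K))) :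
    σ 0 = 1 ∧ ∀ t ∈ Set.Ico (0:ℝ) T,
      deriv σ t = -2 * K * ((n:ℝ) - 1) - α * K ^ 2 * ((n:ℝ) - 1) / σ t := by
  have h0 : (0 : ℝ) ∈ Ico 0 T := ⟨le_rfl, hT⟩
  have hcomp : EqOn (rg2Potential (α * K) ∘ σ) (fun t => -2 * K * ((n:ℝ) - 1) * t + 1)
      (Ico 0 T) := fun t ht => by
    simp only [Function.comp_apply, rg2Potential]
    linarith [himp t ht]
  refine ⟨?_, fun t ht => ?_⟩
  · refine (rg2Potential_strictMonoOn hαK.ne').injOn ⟨hpos 0 h0, hpos2 0 h0⟩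
      ⟨one_pos, by linarith⟩ ?_
    simpa [rg2Potential_one] using hcomp h0
  · rw [deriv_eq_of_rg2Potential_comp_eqOn hαK.ne' (uniqueDiffOn_Ico 0 T t ht) ht (hdiff t ht)
      (hpos t ht).ne' (hpos2 t ht).ne' hcomp]
    field_simp
    ring

/-- If a positive differentiable scaling factor `σ` on `[0, T)`
satisfies the implicit Lambert-W-type equation
`σ t = -2K(n-1)t + 1 + (αK/2) log((2σ t + αK)/(2 + αK))`,
then `σ 0 = 1` and `σ` solves the RG-2 constant-curvature ODE
`σ' t = -2K(n-1) - αK²(n-1)/σ t` on `[0, T)`. -/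
theorem stmt_0 (n : ℕ) (hn : 2 ≤ n) (K α T : ℝ) (hK : K ≠ 0) (hα : 0 < α)
    (hαK : 0 < 2 + α * K) (hT : 0 < T) (σ : ℝ → ℝ)
    (hdiff : ∀ t ∈ Set.Ico (0:ℝ) T, DifferentiableAt ℝ σ t)
    (hpos : ∀ t ∈ Set.Ico (0:ℝ) T, 0 < σ t)
    (hpos2 : ∀ t ∈ Set.Ico (0:ℝ) T, 0 < 2 * σ t + α * K)
    (himp : ∀ t ∈ Set.Ico (0:ℝ) T,
      σ t = -2 * K * ((n:ℝ) - 1) * t + 1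
        + (α * K / 2) * Real.log ((2 * σ t + α * K) / (2 + α * K))) :
    σ 0 = 1 ∧ ∀ t ∈ Set.Ico (0:ℝ) T,
      deriv σ t = -2 * K * ((n:ℝ) - 1) - α * K ^ 2 * ((n:ℝ) - 1) / σ t :=
  stmt_0_general n K α T hαK hT σ hdiff hpos hpos2 himp
end

section
/- Let n ≥ 2 be an integer, K ∈ ℝ with K ≠ 0, α > 0 with 2 + αK > 0, and T > 0. Suppose σ : [0,T) → ℝ is differentiable with σ(0) = 1, σ(t) > 0 and 2σ(t) + αK > 0 for every t ∈ [0,T), and σ solves the ordinary differential equation σ'(t) = −2K(n−1) − αK²(n−1)/σ(t) for all t ∈ [0,T). Then σ satisfies the implicit equation σ(t) = −2K(n−1)t + 1 + (αK/2)·log((2σ(t) + αK)/(2 + αK)) for all t ∈ [0,T). -/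
/-!
Writing the ODE as `σ' = -c (2σ + β) / σ` with `c = K(n-1)` and `β = αK`, the separated
form `σ σ' / (2σ + β) = -c` integrates, via `σ / (2σ + β) = 1/2 - (β/2) / (2σ + β)`, to the
first integral `σ - (β/2) log (2σ + β) + 2ct`, which is therefore constant along every solution.
-/

open Real Set

theorem hasDerivAt_firstIntegral_eq_zero {β c s : ℝ} {x : ℝ → ℝ}
    (hx : HasDerivAt x (-2 * c - β * c / x s) s) (hx0 : x s ≠ 0) (hxβ : 2 * x s + β ≠ 0) :
    HasDerivAt (fun u => x u - β / 2 * log (2 * x u + β) + 2 * c * u) 0 s := by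
  have hlog : HasDerivAt (fun u => log (2 * x u + β))
      (2 * (-2 * c - β * c / x s) / (2 * x s + β)) s :=
    ((hx.const_mul 2).add_const β).log hxβ
  refine ((hx.sub (hlog.const_mul (β / 2))).add
    ((hasDerivAt_id s).const_mul (2 * c))).congr_deriv ?_
  field_simp
  ring

theorem firstIntegral_eq_of_forall_mem_Icc {β c a b : ℝ} {x : ℝ → ℝ} (hab : a ≤ b)
    (hx : ∀ s ∈ Icc a b, HasDerivAt x (-2 * c - β * c / x s) s)
    (hx0 : ∀ s ∈ Icc a b, x s ≠ 0) (hxβ : ∀ s ∈ Icc a b, 2 * x s + β ≠ 0) :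
    x b - β / 2 * log (2 * x b + β) + 2 * c * b
      = x a - β / 2 * log (2 * x a + β) + 2 * c * a := by
  have hderiv : ∀ s ∈ Icc a b,
      HasDerivAt (fun u => x u - β / 2 * log (2 * x u + β) + 2 * c * u) 0 s :=
    fun s hs => hasDerivAt_firstIntegral_eq_zero (hx s hs) (hx0 s hs) (hxβ s hs)
  exact constant_of_has_deriv_right_zero
    (fun s hs => (hderiv s hs).continuousAt.continuousWithinAt)
    (fun s hs => (hderiv s (Ico_subset_Icc_self hs)).hasDerivWithinAt) b ⟨hab, le_rfl⟩

theorem stmt_1_general (n : ℕ) (K α T : ℝ)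
    (hαK : 0 < 2 + α * K) (σ : ℝ → ℝ)
    (hinit : σ 0 = 1)
    (hdiff : ∀ t ∈ Set.Ico (0:ℝ) T, DifferentiableAt ℝ σ t)
    (hpos : ∀ t ∈ Set.Ico (0:ℝ) T, 0 < σ t)
    (hpos2 : ∀ t ∈ Set.Ico (0:ℝ) T, 0 < 2 * σ t + α * K)
    (hODE : ∀ t ∈ Set.Ico (0:ℝ) T,
      deriv σ t = -2 * K * ((n:ℝ) - 1) - α * K ^ 2 * ((n:ℝ) - 1) / σ t) :
    ∀ t ∈ Set.Ico (0:ℝ) T,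
      σ t = -2 * K * ((n:ℝ) - 1) * t + 1
        + (α * K / 2) * Real.log ((2 * σ t + α * K) / (2 + α * K)) := by
  intro t ht
  have hsub : Icc 0 t ⊆ Ico 0 T := Icc_subset_Ico_right ht.2
  have hsol : ∀ s ∈ Icc 0 t,
      HasDerivAt σ (-2 * (K * (n - 1)) - α * K * (K * (n - 1)) / σ s) s := by
    intro s hs
    refine (hdiff s (hsub hs)).hasDerivAt.congr_deriv ?_
    rw [hODE s (hsub hs)]
    ring
  have hconst := firstIntegral_eq_of_forall_mem_Icc ht.1 hsol
    (fun s hs => (hpos s (hsub hs)).ne') (fun s hs => (hpos2 s (hsub hs)).ne')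
  rw [hinit, mul_one, mul_zero, add_zero] at hconst
  rw [log_div (hpos2 t ht).ne' hαK.ne']
  linarith

/-- If a positive differentiable scaling factor `σ` on `[0, T)`
with `σ 0 = 1` solves the RG-2 constant-curvature ODE
`σ' t = -2K(n-1) - αK²(n-1)/σ t`, then it satisfies the implicit
Lambert-W-type equation
`σ t = -2K(n-1)t + 1 + (αK/2) log((2σ t + αK)/(2 + αK))` on `[0, T)`. -/
theorem stmt_1 (n : ℕ) (hn : 2 ≤ n) (K α T : ℝ) (hK : K ≠ 0) (hα : 0 < α)
    (hαK : 0 < 2 + α * K) (hT : 0 < T) (σ : ℝ → ℝ)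
    (hinit : σ 0 = 1)
    (hdiff : ∀ t ∈ Set.Ico (0:ℝ) T, DifferentiableAt ℝ σ t)
    (hpos : ∀ t ∈ Set.Ico (0:ℝ) T, 0 < σ t)
    (hpos2 : ∀ t ∈ Set.Ico (0:ℝ) T, 0 < 2 * σ t + α * K)
    (hODE : ∀ t ∈ Set.Ico (0:ℝ) T,
      deriv σ t = -2 * K * ((n:ℝ) - 1) - α * K ^ 2 * ((n:ℝ) - 1) / σ t) :
    ∀ t ∈ Set.Ico (0:ℝ) T,
      σ t = -2 * K * ((n:ℝ) - 1) * t + 1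
        + (α * K / 2) * Real.log ((2 * σ t + α * K) / (2 + α * K)) :=
  stmt_1_general n K α T hαK σ hinit hdiff hpos hpos2 hODE
end
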